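/- arXiv:2005.12029 — 2 statements merged into one kernel-verified Lean document; each statement's English description precedes it below -/
import Mathlib

section
/- Let C be a category with an initial object k and binary coproducts, (H, Δ, ε, S) a Zhang algebra of C, and (M, Ω_M), (N, Ω_N), (A, Ω_A) right H-comodule algebras. If f : (M, Ω_M) → (A, Ω_A) and g : (N, Ω_N) → (A, Ω_A) are morphisms of right H-comodule algebras, then f ⊔̇ g : M ⊔ N → A is a morphism of right H-comodule algebras from (M ⊔ N, Ω_{M⊔N}) to (A, Ω_A); that is, Ω_A ∘ (f ⊔̇ g) = ((f ⊔̇ g) ⊔ id_H) ∘ Ω_{M⊔N}, where Ω_{M⊔N} := (ι_M ⊔̇ ι_H ⊔̇ ι_N ⊔̇ ι_H) ∘ (Ω_M ⊔ Ω_N) : M ⊔ N → M ⊔ N ⊔ H with ι_M, ι_N, ι_H the canonical morphisms of M, N, H into M ⊔ N ⊔ H. -/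
open CategoryTheory CategoryTheory.Limits

universe u v

/-- The coaction `Ω_{M⊔N} := (ι_M ⊔̇ ι_H ⊔̇ ι_N ⊔̇ ι_H) ∘ (Ω_M ⊔ Ω_N)` on the coproduct of two
right `H`-comodule algebras `(M, Ω_M)` and `(N, Ω_N)`. -/
noncomputable def coprodCoaction {C : Type u} [Category.{v} C] [HasBinaryCoproducts C]
    {M N H : C} (ΩM : M ⟶ M ⨿ H) (ΩN : N ⟶ N ⨿ H) : M ⨿ N ⟶ (M ⨿ N) ⨿ H :=
  coprod.map ΩM ΩN ≫
    coprod.desc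
      (coprod.desc (coprod.inl ≫ coprod.inl) coprod.inr)
      (coprod.desc (coprod.inr ≫ coprod.inl) coprod.inr)

section CoprodCoaction

variable {C : Type u} [Category.{v} C] [HasBinaryCoproducts C] {M N H : C}
  (ΩM : M ⟶ M ⨿ H) (ΩN : N ⟶ N ⨿ H)

theorem inl_coprodCoaction :
    coprod.inl ≫ coprodCoaction ΩM ΩN = ΩM ≫ coprod.map coprod.inl (𝟙 H) := by
  rw [coprodCoaction, coprod.inl_map_assoc, coprod.inl_desc, ← coprod.desc_comp_inl_comp_inr,
    Category.id_comp]

theorem inr_coprodCoaction :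
    coprod.inr ≫ coprodCoaction ΩM ΩN = ΩN ≫ coprod.map coprod.inr (𝟙 H) := by
  rw [coprodCoaction, coprod.inr_map_assoc, coprod.inr_desc, ← coprod.desc_comp_inl_comp_inr,
    Category.id_comp]

end CoprodCoaction

theorem desc_of_comodule_morphisms_is_comodule_morphism_general
    {C : Type u} [Category.{v} C] [HasBinaryCoproducts C]
    (H : C)
    (M N A : C) (ΩM : M ⟶ M ⨿ H) (ΩN : N ⟶ N ⨿ H) (ΩA : A ⟶ A ⨿ H)
    (f : M ⟶ A) (g : N ⟶ A)
    (hf : f ≫ ΩA = ΩM ≫ coprod.map f (𝟙 H))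
    (hg : g ≫ ΩA = ΩN ≫ coprod.map g (𝟙 H)) :
    coprod.desc f g ≫ ΩA
      = coprodCoaction ΩM ΩN ≫ coprod.map (coprod.desc f g) (𝟙 H) := by
  ext
  · rw [coprod.inl_desc_assoc, ← Category.assoc, inl_coprodCoaction, Category.assoc,
      coprod.map_map, coprod.inl_desc, Category.comp_id, hf]
  · rw [coprod.inr_desc_assoc, ← Category.assoc, inr_coprodCoaction, Category.assoc,
      coprod.map_map, coprod.inr_desc, Category.comp_id, hg]

/-- If `f : (M, Ω_M) → (A, Ω_A)` and `g : (N, Ω_N) → (A, Ω_A)` are morphisms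
of right `H`-comodule algebras over a Zhang algebra `(H, Δ, ε, S)`, then
`f ⊔̇ g : (M ⊔ N, Ω_{M⊔N}) → (A, Ω_A)` is a morphism of right `H`-comodule algebras. -/
theorem desc_of_comodule_morphisms_is_comodule_morphism
    {C : Type u} [Category.{v} C] [HasInitial C] [HasBinaryCoproducts C]
    (H : C) (Δ : H ⟶ H ⨿ H) (ε : H ⟶ ⊥_ C) (S : H ⟶ H)
    (hcoassoc : Δ ≫ coprod.map Δ (𝟙 H) ≫ (coprod.associator H H H).hom
      = Δ ≫ coprod.map (𝟙 H) Δ)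
    (hcounit_l : Δ ≫ coprod.desc (ε ≫ initial.to H) (𝟙 H) = 𝟙 H)
    (hcounit_r : Δ ≫ coprod.desc (𝟙 H) (ε ≫ initial.to H) = 𝟙 H)
    (hantipode_l : Δ ≫ coprod.desc S (𝟙 H) = ε ≫ initial.to H)
    (hantipode_r : Δ ≫ coprod.desc (𝟙 H) S = ε ≫ initial.to H)
    (M N A : C) (ΩM : M ⟶ M ⨿ H) (ΩN : N ⟶ N ⨿ H) (ΩA : A ⟶ A ⨿ H)
    (hM_coassoc : ΩM ≫ coprod.map ΩM (𝟙 H) ≫ (coprod.associator M H H).hom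
      = ΩM ≫ coprod.map (𝟙 M) Δ)
    (hM_counit : ΩM ≫ coprod.desc (𝟙 M) (ε ≫ initial.to M) = 𝟙 M)
    (hN_coassoc : ΩN ≫ coprod.map ΩN (𝟙 H) ≫ (coprod.associator N H H).hom
      = ΩN ≫ coprod.map (𝟙 N) Δ)
    (hN_counit : ΩN ≫ coprod.desc (𝟙 N) (ε ≫ initial.to N) = 𝟙 N)
    (hA_coassoc : ΩA ≫ coprod.map ΩA (𝟙 H) ≫ (coprod.associator A H H).hom
      = ΩA ≫ coprod.map (𝟙 A) Δ)
    (hA_counit : ΩA ≫ coprod.desc (𝟙 A) (ε ≫ initial.to A) = 𝟙 A)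
    (f : M ⟶ A) (g : N ⟶ A)
    (hf : f ≫ ΩA = ΩM ≫ coprod.map f (𝟙 H))
    (hg : g ≫ ΩA = ΩN ≫ coprod.map g (𝟙 H)) :
    coprod.desc f g ≫ ΩA
      = coprodCoaction ΩM ΩN ≫ coprod.map (coprod.desc f g) (𝟙 H) :=
  desc_of_comodule_morphisms_is_comodule_morphism_general H M N A ΩM ΩN ΩA f g hf hg
end

section
/- Let C be a category with an initial object k and binary coproducts, and let (H, Δ, ε, S) be a Zhang algebra of C. Then the antipode is compatible with the adjoint coaction: Ω_c ∘ S = (id_H ⊔ S) ∘ Ω_c, where id_H ⊔ S : H ⊔ H → H ⊔ H applies S to the second coproduct factor. -/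
/-!
A Zhang algebra `H` is a cogroup object, so every hom-set `H ⟶ X` is a group under the
convolution `f * g := Δ ≫ coprod.desc f g`, with unit `ε ≫ initial.to X` and inverse
`f⁻¹ := S ≫ f`, and postcomposition with any `X ⟶ Y` is a group homomorphism. In the group
`H ⟶ H ⨿ H` the adjoint coaction is the conjugate `ι₁ * ι₂ * ι₁⁻¹`, and `coprod.map (𝟙 H) S`
fixes `ι₁` and inverts `ι₂`. Both sides of the claim are therefore `ι₁ * ι₂⁻¹ * ι₁⁻¹`.
-/

open CategoryTheory CategoryTheory.Limits

universe u v

/-- The adjoint coaction `Ω_c := (ι₁ ⊔̇ ι₂ ⊔̇ ι₁) ∘ (id_{H⊔H} ⊔ S) ∘ (Δ ⊔ id_H) ∘ Δ` of a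
Zhang algebra on itself. -/
noncomputable def adjointCoaction {C : Type u} [Category.{v} C] [HasBinaryCoproducts C]
    (H : C) (Δ : H ⟶ H ⨿ H) (S : H ⟶ H) : H ⟶ H ⨿ H :=
  Δ ≫ coprod.map Δ (𝟙 H) ≫ coprod.map (𝟙 (H ⨿ H)) S ≫
    coprod.desc (coprod.desc coprod.inl coprod.inr) coprod.inl

section Convolution

variable {C : Type u} [Category.{v} C] [HasBinaryCoproducts C] {H X : C} (Δ : H ⟶ H ⨿ H)

theorem convolution_comp {Y : C} (f g : H ⟶ X) (h : X ⟶ Y) :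
    (Δ ≫ coprod.desc f g) ≫ h = Δ ≫ coprod.desc (f ≫ h) (g ≫ h) := by
  simp

theorem coprod.associator_hom_desc {A B D : C} (f : A ⟶ X) (g : B ⟶ X) (h : D ⟶ X) :
    (coprod.associator A B D).hom ≫ coprod.desc f (coprod.desc g h)
      = coprod.desc (coprod.desc f g) h := by
  ext <;> simp only [coprod.associator_hom, coprod.inl_desc_assoc, coprod.inr_desc_assoc,
    coprod.inl_desc, coprod.inr_desc, Category.assoc]

theorem convolution_assoc
    (hcoassoc : Δ ≫ coprod.map Δ (𝟙 H) ≫ (coprod.associator H H H).hom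
      = Δ ≫ coprod.map (𝟙 H) Δ) (f g h : H ⟶ X) :
    Δ ≫ coprod.desc (Δ ≫ coprod.desc f g) h = Δ ≫ coprod.desc f (Δ ≫ coprod.desc g h) := by
  calc Δ ≫ coprod.desc (Δ ≫ coprod.desc f g) h
      = Δ ≫ coprod.map Δ (𝟙 H) ≫ (coprod.associator H H H).hom
          ≫ coprod.desc f (coprod.desc g h) := by
        rw [coprod.associator_hom_desc, coprod.map_desc, Category.id_comp]
    _ = Δ ≫ coprod.desc f (Δ ≫ coprod.desc g h) := by
        rw [reassoc_of% hcoassoc, coprod.map_desc, Category.id_comp]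

variable [HasInitial C] (ε : H ⟶ ⊥_ C)

theorem counit_convolution (hcounit_l : Δ ≫ coprod.desc (ε ≫ initial.to H) (𝟙 H) = 𝟙 H)
    (f : H ⟶ X) : Δ ≫ coprod.desc (ε ≫ initial.to X) f = f := by
  have hfactor :
      coprod.desc (ε ≫ initial.to X) f = coprod.desc (ε ≫ initial.to H) (𝟙 H) ≫ f := by
    ext
    · simp only [coprod.inl_desc, coprod.inl_desc_assoc, Category.assoc]
      exact congrArg (ε ≫ ·) (initial.hom_ext _ _)
    · simp
  rw [hfactor, reassoc_of% hcounit_l]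

theorem antipode_convolution (S : H ⟶ H)
    (hantipode_l : Δ ≫ coprod.desc S (𝟙 H) = ε ≫ initial.to H) (f : H ⟶ X) :
    Δ ≫ coprod.desc (S ≫ f) f = ε ≫ initial.to X := by
  have hfactor : coprod.desc (S ≫ f) f = coprod.desc S (𝟙 H) ≫ f := by
    ext <;> simp
  rw [hfactor, reassoc_of% hantipode_l]
  exact congrArg (ε ≫ ·) (initial.hom_ext _ _)

variable (X)

noncomputable abbrev convolutionGroup (S : H ⟶ H)
    (hcoassoc : Δ ≫ coprod.map Δ (𝟙 H) ≫ (coprod.associator H H H).hom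
      = Δ ≫ coprod.map (𝟙 H) Δ)
    (hcounit_l : Δ ≫ coprod.desc (ε ≫ initial.to H) (𝟙 H) = 𝟙 H)
    (hantipode_l : Δ ≫ coprod.desc S (𝟙 H) = ε ≫ initial.to H) :
    Group (H ⟶ X) :=
  letI : Mul (H ⟶ X) := ⟨fun f g => Δ ≫ coprod.desc f g⟩
  letI : One (H ⟶ X) := ⟨ε ≫ initial.to X⟩
  letI : Inv (H ⟶ X) := ⟨fun f => S ≫ f⟩
  Group.ofLeftAxioms (convolution_assoc Δ hcoassoc) (counit_convolution Δ ε hcounit_l)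
    (antipode_convolution Δ ε S hantipode_l)

end Convolution

theorem adjointCoaction_eq_conj {C : Type u} [Category.{v} C] [HasBinaryCoproducts C]
    (H : C) (Δ : H ⟶ H ⨿ H) (S : H ⟶ H) :
    adjointCoaction H Δ S
      = Δ ≫ coprod.desc (Δ ≫ coprod.desc coprod.inl coprod.inr) (S ≫ coprod.inl) := by
  simp [adjointCoaction]

theorem zhang_antipode_adjointCoaction_general
    {C : Type u} [Category.{v} C] [HasInitial C] [HasBinaryCoproducts C]
    (H : C) (Δ : H ⟶ H ⨿ H) (ε : H ⟶ ⊥_ C) (S : H ⟶ H)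
    (hcoassoc : Δ ≫ coprod.map Δ (𝟙 H) ≫ (coprod.associator H H H).hom
      = Δ ≫ coprod.map (𝟙 H) Δ)
    (hcounit_l : Δ ≫ coprod.desc (ε ≫ initial.to H) (𝟙 H) = 𝟙 H)
    (hantipode_l : Δ ≫ coprod.desc S (𝟙 H) = ε ≫ initial.to H) :
    S ≫ adjointCoaction H Δ S = adjointCoaction H Δ S ≫ coprod.map (𝟙 H) S := by
  let := convolutionGroup (H ⨿ H) Δ ε S hcoassoc hcounit_l hantipode_l
  set σ : H ⨿ H ⟶ H ⨿ H := coprod.map (𝟙 H) S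
  have hΩ : adjointCoaction H Δ S = coprod.inl * coprod.inr * coprod.inl⁻¹ :=
    adjointCoaction_eq_conj H Δ S
  have hmul : ∀ f g : H ⟶ H ⨿ H, (f * g) ≫ σ = (f ≫ σ) * (g ≫ σ) :=
    fun f g => convolution_comp Δ f g σ
  have hinv : ∀ f : H ⟶ H ⨿ H, f⁻¹ ≫ σ = (f ≫ σ)⁻¹ := fun f => Category.assoc S f σ
  have hinl : coprod.inl ≫ σ = coprod.inl := by simp [σ]
  have hinr : coprod.inr ≫ σ = coprod.inr⁻¹ := coprod.inr_map (𝟙 H) S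
  calc S ≫ adjointCoaction H Δ S
      = (coprod.inl * coprod.inr * coprod.inl⁻¹)⁻¹ := by rw [hΩ]; rfl
    _ = coprod.inl * coprod.inr⁻¹ * coprod.inl⁻¹ := by group
    _ = adjointCoaction H Δ S ≫ σ := by rw [hΩ, hmul, hmul, hinv, hinl, hinr]

/-- For a Zhang algebra `(H, Δ, ε, S)`, the antipode is compatible with the
adjoint coaction: `Ω_c ∘ S = (id_H ⊔ S) ∘ Ω_c`. -/
theorem zhang_antipode_adjointCoaction
    {C : Type u} [Category.{v} C] [HasInitial C] [HasBinaryCoproducts C]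
    (H : C) (Δ : H ⟶ H ⨿ H) (ε : H ⟶ ⊥_ C) (S : H ⟶ H)
    (hcoassoc : Δ ≫ coprod.map Δ (𝟙 H) ≫ (coprod.associator H H H).hom
      = Δ ≫ coprod.map (𝟙 H) Δ)
    (hcounit_l : Δ ≫ coprod.desc (ε ≫ initial.to H) (𝟙 H) = 𝟙 H)
    (hcounit_r : Δ ≫ coprod.desc (𝟙 H) (ε ≫ initial.to H) = 𝟙 H)
    (hantipode_l : Δ ≫ coprod.desc S (𝟙 H) = ε ≫ initial.to H)
    (hantipode_r : Δ ≫ coprod.desc (𝟙 H) S = ε ≫ initial.to H) :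
    S ≫ adjointCoaction H Δ S = adjointCoaction H Δ S ≫ coprod.map (𝟙 H) S :=
  zhang_antipode_adjointCoaction_general H Δ ε S hcoassoc hcounit_l hantipode_l
end
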